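/- arXiv:2603.15680 — 2 statements merged into one kernel-verified Lean document; each statement's English description precedes it below -/
import Mathlib

section
/- There exist δ > 0 and a constant L with 0 < L < 1 such that S maps the closed interval U_δ = {x ∈ ℝ : |x - π| ≤ δ} into itself and |S'(x)| ≤ L for all x ∈ U_δ. -/
open Real Finset

/-- The fixed-point function `S` of the paper:
`S(x) = x + ∑_{k=1}^{P} (∏_{ℓ=1}^{k-1} (2ℓ-1)/(2ℓ)) · sin(x)^{2k-1}/(2k-1)`. -/
noncomputable def S (P : ℕ) (x : ℝ) : ℝ :=
  x + ∑ k ∈ Finset.Icc 1 P,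
    (∏ l ∈ Finset.Icc 1 (k - 1), ((2 * (l : ℝ) - 1) / (2 * l))) *
      (Real.sin x) ^ (2 * k - 1) / (2 * (k : ℝ) - 1)

noncomputable def c (k : ℕ) : ℝ :=
  ∏ l ∈ Finset.Icc 1 (k - 1), ((2 * (l : ℝ) - 1) / (2 * l))

noncomputable def g (P : ℕ) (x : ℝ) : ℝ :=
  1 + ∑ k ∈ Finset.Icc 1 P, c k * (Real.sin x ^ (2 * k - 2) * Real.cos x)

lemma hasDerivAt_S (P : ℕ) (x : ℝ) : HasDerivAt (S P) (g P x) x := by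
  have h : ∀ k ∈ Finset.Icc 1 P,
      HasDerivAt (fun y => c k * Real.sin y ^ (2 * k - 1) / (2 * (k : ℝ) - 1))
        (c k * (Real.sin x ^ (2 * k - 2) * Real.cos x)) x := by
    intro k hk
    have hk1 : 1 ≤ k := (Finset.mem_Icc.mp hk).1
    have h1 : HasDerivAt (fun y => Real.sin y ^ (2 * k - 1))
        ((2 * k - 1 : ℕ) * Real.sin x ^ (2 * k - 1 - 1) * Real.cos x) x :=
      (Real.hasDerivAt_sin x).pow _
    have h2 := (h1.const_mul (c k)).div_const (2 * (k : ℝ) - 1)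
    refine h2.congr_deriv ?_
    have he : 2 * k - 1 - 1 = 2 * k - 2 := by omega
    have hc : ((2 * k - 1 : ℕ) : ℝ) = 2 * (k : ℝ) - 1 := by
      push_cast [Nat.cast_sub (by omega : 1 ≤ 2 * k)]; ring
    have hne : (2 * (k : ℝ) - 1) ≠ 0 := by
      have : (1 : ℝ) ≤ (k : ℝ) := by exact_mod_cast hk1
      nlinarith
    rw [he, hc]
    field_simp
  have := HasDerivAt.fun_sum h
  have hS : HasDerivAt (S P)
      (1 + ∑ k ∈ Finset.Icc 1 P, c k * (Real.sin x ^ (2 * k - 2) * Real.cos x)) x :=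
    (hasDerivAt_id x).add this
  exact hS

lemma g_pi (P : ℕ) (hP : 0 < P) : g P Real.pi = 0 := by
  unfold g
  rw [Finset.sum_eq_single_of_mem 1 (Finset.mem_Icc.mpr ⟨le_refl 1, hP⟩)]
  · simp [c, Real.sin_pi, Real.cos_pi]
  · intro k hk hk1
    have hk1' : 1 ≤ k := (Finset.mem_Icc.mp hk).1
    have : 2 * k - 2 ≠ 0 := by omega
    simp [Real.sin_pi, zero_pow this]

lemma g_cont (P : ℕ) : Continuous (g P) := by
  unfold g
  exact continuous_const.add (continuous_finset_sum _ fun k _ =>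
    continuous_const.mul ((Real.continuous_sin.pow _).mul Real.continuous_cos))

lemma S_pi (P : ℕ) : S P Real.pi = Real.pi := by
  unfold S
  rw [Finset.sum_eq_zero, add_zero]
  intro k hk
  have hk1 : 1 ≤ k := (Finset.mem_Icc.mp hk).1
  have : 2 * k - 1 ≠ 0 := by omega
  simp [Real.sin_pi, zero_pow this]

theorem stmt_8 (P : ℕ) (hP : 0 < P) :
    ∃ δ > (0 : ℝ), ∃ L : ℝ, 0 < L ∧ L < 1 ∧
      (∀ x : ℝ, |x - Real.pi| ≤ δ → |S P x - Real.pi| ≤ δ) ∧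
      (∀ x : ℝ, |x - Real.pi| ≤ δ → |deriv (S P) x| ≤ L) := by
  have hgc := (g_cont P).continuousAt (x := Real.pi)
  rw [Metric.continuousAt_iff] at hgc
  obtain ⟨ε, hε, hδ⟩ := hgc (1/2) (by norm_num)
  refine ⟨ε/2, by linarith, 1/2, by norm_num, by norm_num, ?_, ?_⟩
  · -- mapping
    intro x hx
    have hbound : ∀ y ∈ Metric.closedBall Real.pi (ε/2), |g P y| ≤ 1/2 := by
      intro y hy
      rw [Metric.mem_closedBall] at hy
      have : dist y Real.pi < ε := lt_of_le_of_lt hy (by linarith)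
      have := hδ this
      rw [g_pi P hP] at this
      rw [Real.dist_eq, sub_zero] at this
      linarith
    have hconv : Convex ℝ (Metric.closedBall Real.pi (ε/2)) := convex_closedBall _ _
    have hmemx : x ∈ Metric.closedBall Real.pi (ε/2) := by
      rw [Metric.mem_closedBall, Real.dist_eq]; exact hx
    have hmemπ : Real.pi ∈ Metric.closedBall Real.pi (ε/2) :=
      Metric.mem_closedBall_self (by linarith)
    have key := hconv.norm_image_sub_le_of_norm_hasDerivWithin_le
      (fun y _ => (hasDerivAt_S P y).hasDerivWithinAt)
      (fun y hy => by simpa [Real.norm_eq_abs] using hbound y hy) hmemπ hmemx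
    rw [S_pi P] at key
    rw [Real.norm_eq_abs, Real.norm_eq_abs] at key
    calc |S P x - Real.pi| ≤ 1/2 * |x - Real.pi| := by rw [show (1:ℝ)/2 = 2⁻¹ by norm_num]; exact key
      _ ≤ 1/2 * (ε/2) := by
          apply mul_le_mul_of_nonneg_left hx (by norm_num)
      _ ≤ ε/2 := by linarith
  · intro x hx
    rw [(hasDerivAt_S P x).deriv]
    have : dist x Real.pi < ε := by rw [Real.dist_eq]; linarith
    have := hδ this
    rw [g_pi P hP, Real.dist_eq, sub_zero] at this
    linarith
end

section
/- There exist δ > 0 and C > 0 such that |S(x) - π| ≤ C · |x - π|^{2P+1} for all x with |x - π| ≤ δ. -/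
open Real Finset

noncomputable def cc (k : ℕ) : ℝ :=
  ∏ l ∈ Finset.Icc 1 (k - 1), ((2 * (l : ℝ) - 1) / (2 * l))

noncomputable def AA (P : ℕ) (t : ℝ) : ℝ :=
  ∑ k ∈ Finset.Icc 1 P, cc k * t ^ (2 * k - 2)

noncomputable def AA' (P : ℕ) (t : ℝ) : ℝ :=
  ∑ k ∈ Finset.Icc 1 P, cc k * (((2 * k - 2 : ℕ) : ℝ) * t ^ (2 * k - 3))

lemma cc_pos (k : ℕ) : 0 < cc k := by
  apply Finset.prod_pos
  intro l hl
  simp only [Finset.mem_Icc] at hl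
  have : (1 : ℝ) ≤ (l : ℝ) := by exact_mod_cast hl.1
  apply div_pos <;> nlinarith

lemma cc_le_one (k : ℕ) : cc k ≤ 1 := by
  apply Finset.prod_le_one
  · intro l hl
    simp only [Finset.mem_Icc] at hl
    have : (1 : ℝ) ≤ (l : ℝ) := by exact_mod_cast hl.1
    apply div_nonneg <;> nlinarith
  · intro l hl
    simp only [Finset.mem_Icc] at hl
    have : (1 : ℝ) ≤ (l : ℝ) := by exact_mod_cast hl.1
    rw [div_le_one (by nlinarith)]
    nlinarith

lemma cc_succ (k : ℕ) (hk : 1 ≤ k) :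
    cc (k + 1) = cc k * ((2 * (k : ℝ) - 1) / (2 * k)) := by
  obtain ⟨m, rfl⟩ : ∃ m, k = m + 1 := ⟨k - 1, by omega⟩
  simp only [cc, Nat.add_sub_cancel]
  rw [Finset.prod_Icc_succ_top (by omega : 1 ≤ m + 1)]

lemma hasDerivAt_AA (P : ℕ) (t : ℝ) : HasDerivAt (AA P) (AA' P t) t := by
  apply HasDerivAt.fun_sum
  intro k hk
  have h : 2 * k - 2 - 1 = 2 * k - 3 := by omega
  simpa [h] using (hasDerivAt_pow (2 * k - 2) t).const_mul (cc k)

lemma key (P : ℕ) (hP : 1 ≤ P) (t : ℝ) :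
    (1 - t ^ 2) * AA' P t = t * AA P t - (2 * (P : ℝ) - 1) * cc P * t ^ (2 * P - 1) := by
  induction P, hP using Nat.le_induction with
  | base =>
    simp only [AA, AA', cc]
    norm_num
  | succ P hP ih =>
    have hAA : AA (P + 1) t = AA P t + cc (P + 1) * t ^ (2 * P) := by
      simp only [AA]
      rw [Finset.sum_Icc_succ_top (by omega), show 2 * (P + 1) - 2 = 2 * P by omega]
    have hAA' : AA' (P + 1) t = AA' P t + cc (P + 1) * (2 * (P : ℝ)) * t ^ (2 * P - 1) := by
      simp only [AA']
      rw [Finset.sum_Icc_succ_top (by omega),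
        show 2 * (P + 1) - 2 = 2 * P by omega, show 2 * (P + 1) - 3 = 2 * P - 1 by omega]
      push_cast
      ring
    have hrec : cc (P + 1) * (2 * (P : ℝ)) = cc P * (2 * (P : ℝ) - 1) := by
      rw [cc_succ P hP]
      have hp : (2 * (P : ℝ)) ≠ 0 := by positivity
      field_simp
    have e1 : t ^ (2 * (P + 1) - 1) = t ^ (2 * P - 1) * t ^ 2 := by
      rw [← pow_add]
      congr 1
      omega
    have e2 : t ^ (2 * P) = t ^ (2 * P - 1) * t := by
      rw [← pow_succ]
      congr 1
      omega
    rw [hAA, hAA', e1, e2]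
    push_cast
    linear_combination ih + t ^ (2 * P - 1) * hrec

lemma AA_zero (P : ℕ) (hP : 1 ≤ P) : AA P 0 = 1 := by
  rw [AA, Finset.sum_eq_single 1]
  · simp [cc]
  · intro k hk hne
    simp only [Finset.mem_Icc] at hk
    rw [zero_pow (by omega), mul_zero]
  · intro h
    exact absurd (Finset.mem_Icc.mpr ⟨le_refl 1, hP⟩) h

lemma hasDerivAt_G (P : ℕ) (hP : 1 ≤ P) (t : ℝ) (ht : t ^ 2 < 1) :
    HasDerivAt (fun u => Real.sqrt (1 - u ^ 2) * AA P u)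
      (-((2 * (P : ℝ) - 1) * cc P * t ^ (2 * P - 1) / Real.sqrt (1 - t ^ 2))) t := by
  have hpos : (0 : ℝ) < 1 - t ^ 2 := by linarith
  have hs : (0 : ℝ) < Real.sqrt (1 - t ^ 2) := Real.sqrt_pos.2 hpos
  have hmul : Real.sqrt (1 - t ^ 2) * Real.sqrt (1 - t ^ 2) = 1 - t ^ 2 :=
    Real.mul_self_sqrt hpos.le
  have h1 : HasDerivAt (fun u : ℝ => 1 - u ^ 2) (-(2 * t)) t := by
    simpa using (hasDerivAt_pow 2 t).const_sub 1
  have h2 : HasDerivAt (fun u : ℝ => Real.sqrt (1 - u ^ 2))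
      (1 / (2 * Real.sqrt (1 - t ^ 2)) * (-(2 * t))) t :=
    (Real.hasDerivAt_sqrt hpos.ne').comp t h1
  have h3 := h2.fun_mul (hasDerivAt_AA P t)
  refine h3.congr_deriv (Eq.symm ?_)
  have hk := key P hP t
  field_simp
  linear_combination -hk - AA' P t * hmul

lemma G_bound (P : ℕ) (hP : 1 ≤ P) (t : ℝ) (ht : |t| ≤ 1 / 2) :
    |1 - Real.sqrt (1 - t ^ 2) * AA P t| ≤ 4 * P * |t| ^ (2 * P) := by
  set G : ℝ → ℝ := fun u => Real.sqrt (1 - u ^ 2) * AA P u with hG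
  have hmem : ∀ u ∈ segment ℝ (0 : ℝ) t, |u| ≤ |t| := by
    intro u hu
    obtain ⟨a, b, ha, hb, hab, rfl⟩ := hu
    simp only [smul_eq_mul, mul_zero, zero_add]
    rw [abs_mul]
    calc |b| * |t| ≤ 1 * |t| := by
          apply mul_le_mul_of_nonneg_right _ (abs_nonneg t)
          rw [abs_of_nonneg hb]; linarith
      _ = |t| := one_mul _
  have hC : ∀ u ∈ segment ℝ (0 : ℝ) t,
      ‖-((2 * (P : ℝ) - 1) * cc P * u ^ (2 * P - 1) / Real.sqrt (1 - u ^ 2))‖ ≤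
        (2 * (2 * (P : ℝ) - 1)) * |t| ^ (2 * P - 1) := by
    intro u hu
    have hu2 : |u| ≤ 1 / 2 := le_trans (hmem u hu) ht
    have hu2' : u ^ 2 ≤ 1 / 4 := by
      have := abs_nonneg u
      nlinarith [sq_abs u]
    have hhalf : (1 : ℝ) / 2 ≤ Real.sqrt (1 - u ^ 2) := by
      rw [show (1 : ℝ) / 2 = Real.sqrt (1 / 4) by
        rw [show (1 : ℝ) / 4 = (1 / 2) ^ 2 by norm_num, Real.sqrt_sq (by norm_num)]]
      exact Real.sqrt_le_sqrt (by linarith)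
    have hPpos : (0 : ℝ) < 2 * (P : ℝ) - 1 := by
      have : (1 : ℝ) ≤ (P : ℝ) := by exact_mod_cast hP
      linarith
    rw [Real.norm_eq_abs, abs_neg, abs_div, abs_mul, abs_mul,
      abs_of_pos hPpos, abs_of_pos (cc_pos P), abs_of_pos (lt_of_lt_of_le (by norm_num) hhalf),
      abs_pow]
    rw [div_le_iff₀ (lt_of_lt_of_le (by norm_num) hhalf)]
    have h1 : |u| ^ (2 * P - 1) ≤ |t| ^ (2 * P - 1) :=
      pow_le_pow_left₀ (abs_nonneg u) (hmem u hu) _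
    have h2 : cc P ≤ 1 := cc_le_one P
    have h3 : (0:ℝ) ≤ |t| ^ (2 * P - 1) := by positivity
    have h4 : cc P * |u| ^ (2 * P - 1) ≤ 1 * |t| ^ (2 * P - 1) :=
      mul_le_mul h2 h1 (by positivity) zero_le_one
    nlinarith [mul_le_mul_of_nonneg_left hhalf
      (by positivity : (0:ℝ) ≤ 2 * (2 * (P : ℝ) - 1) * |t| ^ (2 * P - 1)),
      mul_le_mul_of_nonneg_left h4 hPpos.le]
  have hd : ∀ u ∈ segment ℝ (0 : ℝ) t,
      HasDerivWithinAt G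
        (-((2 * (P : ℝ) - 1) * cc P * u ^ (2 * P - 1) / Real.sqrt (1 - u ^ 2)))
        (segment ℝ (0 : ℝ) t) u := by
    intro u hu
    have hu2 : |u| ≤ 1 / 2 := le_trans (hmem u hu) ht
    have : u ^ 2 < 1 := by nlinarith [sq_abs u, abs_nonneg u]
    exact (hasDerivAt_G P hP u this).hasDerivWithinAt
  have := Convex.norm_image_sub_le_of_norm_hasDerivWithin_le hd hC (convex_segment _ _)
    (left_mem_segment ℝ 0 t) (right_mem_segment ℝ 0 t)
  have hG0 : G 0 = 1 := by
    simp [hG, AA_zero P hP]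
  rw [Real.norm_eq_abs, Real.norm_eq_abs, hG0, sub_zero] at this
  calc |1 - G t| = |G t - 1| := abs_sub_comm _ _
    _ ≤ 2 * (2 * (P : ℝ) - 1) * |t| ^ (2 * P - 1) * |t| := this
    _ ≤ 4 * P * |t| ^ (2 * P) := by
        have : |t| ^ (2 * P - 1) * |t| = |t| ^ (2 * P) := by
          rw [← pow_succ]; congr 1; omega
        rw [mul_assoc, this]
        apply mul_le_mul_of_nonneg_right _ (by positivity)
        have : (1 : ℝ) ≤ (P : ℝ) := by exact_mod_cast hP
        linarith

lemma hasDerivAt_S_s11 (P : ℕ) (x : ℝ) :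
    HasDerivAt (S P) (1 + Real.cos x * AA P (Real.sin x)) x := by
  have hsum : HasDerivAt (fun y => ∑ k ∈ Finset.Icc 1 P,
      cc k * Real.sin y ^ (2 * k - 1) / (2 * (k : ℝ) - 1))
      (Real.cos x * AA P (Real.sin x)) x := by
    have : Real.cos x * AA P (Real.sin x) =
        ∑ k ∈ Finset.Icc 1 P, cc k * Real.sin x ^ (2 * k - 2) * Real.cos x := by
      rw [AA, Finset.mul_sum]
      apply Finset.sum_congr rfl
      intro k _
      ring
    rw [this]
    apply HasDerivAt.fun_sum
    intro k hk
    simp only [Finset.mem_Icc] at hk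
    have hk1 : 1 ≤ k := hk.1
    have hcast : ((2 * k - 1 : ℕ) : ℝ) = 2 * (k : ℝ) - 1 := by
      have : (1 : ℕ) ≤ 2 * k := by omega
      push_cast [Nat.cast_sub this]
      ring
    have hne : (2 * (k : ℝ) - 1) ≠ 0 := by
      have : (1 : ℝ) ≤ (k : ℝ) := by exact_mod_cast hk1
      nlinarith
    have h1 := (((Real.hasDerivAt_sin x).fun_pow (2 * k - 1)).const_mul (cc k)).div_const
      (2 * (k : ℝ) - 1)
    refine h1.congr_deriv (Eq.symm ?_)
    rw [hcast, show 2 * k - 1 - 1 = 2 * k - 2 by omega]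
    field_simp
  have := (hasDerivAt_id x).add hsum
  exact this

theorem stmt_11 (P : ℕ) (hP : 0 < P) :
    ∃ δ > (0 : ℝ), ∃ C > (0 : ℝ), ∀ x : ℝ, |x - Real.pi| ≤ δ →
      |S P x - Real.pi| ≤ C * |x - Real.pi| ^ (2 * P + 1) := by
  refine ⟨1 / 2, by norm_num, 4 * P, by positivity, fun x hx => ?_⟩
  have hpi : (3 : ℝ) < Real.pi := Real.pi_gt_three
  have hmem : ∀ y ∈ segment ℝ Real.pi x, |y - Real.pi| ≤ |x - Real.pi| := by
    intro y hy
    obtain ⟨a, b, ha, hb, hab, rfl⟩ := hy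
    have : a • Real.pi + b • x - Real.pi = b * (x - Real.pi) := by
      simp only [smul_eq_mul]; nlinarith
    rw [this, abs_mul]
    calc |b| * |x - Real.pi| ≤ 1 * |x - Real.pi| := by
          apply mul_le_mul_of_nonneg_right _ (abs_nonneg _)
          rw [abs_of_nonneg hb]; linarith
      _ = _ := one_mul _
  have hSpi : S P Real.pi = Real.pi := by
    rw [S]
    rw [Finset.sum_eq_zero, add_zero]
    intro k hk
    simp only [Finset.mem_Icc] at hk
    rw [Real.sin_pi, zero_pow (by omega), mul_zero, zero_div]
  have hbound : ∀ y ∈ segment ℝ Real.pi x,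
      ‖1 + Real.cos y * AA P (Real.sin y)‖ ≤ 4 * P * |x - Real.pi| ^ (2 * P) := by
    intro y hy
    have hy2 : |y - Real.pi| ≤ 1 / 2 := le_trans (hmem y hy) hx
    have hsin : |Real.sin y| ≤ |y - Real.pi| := by
      have : Real.sin (y - Real.pi) = -Real.sin y := Real.sin_sub_pi y
      calc |Real.sin y| = |Real.sin (y - Real.pi)| := by rw [this, abs_neg]
        _ ≤ |y - Real.pi| := Real.abs_sin_le_abs
    have hsin2 : |Real.sin y| ≤ 1 / 2 := le_trans hsin hy2
    have hcos : Real.cos y ≤ 0 := by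
      apply Real.cos_nonpos_of_pi_div_two_le_of_le
      · cases' abs_le.mp hy2 with h1 h2; linarith
      · cases' abs_le.mp hy2 with h1 h2; linarith
    have hcoseq : Real.cos y = -Real.sqrt (1 - Real.sin y ^ 2) := by
      have h1 : 1 - Real.sin y ^ 2 = Real.cos y ^ 2 := by
        nlinarith [Real.sin_sq_add_cos_sq y]
      rw [h1, Real.sqrt_sq_eq_abs, abs_of_nonpos hcos, neg_neg]
    rw [Real.norm_eq_abs, hcoseq]
    have := G_bound P hP (Real.sin y) hsin2
    calc |1 + -Real.sqrt (1 - Real.sin y ^ 2) * AA P (Real.sin y)|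
        = |1 - Real.sqrt (1 - Real.sin y ^ 2) * AA P (Real.sin y)| := by ring_nf
      _ ≤ 4 * P * |Real.sin y| ^ (2 * P) := this
      _ ≤ 4 * P * |x - Real.pi| ^ (2 * P) := by
          apply mul_le_mul_of_nonneg_left _ (by positivity)
          exact pow_le_pow_left₀ (abs_nonneg _) (le_trans hsin (hmem y hy)) _
  have hd : ∀ y ∈ segment ℝ Real.pi x,
      HasDerivWithinAt (S P) (1 + Real.cos y * AA P (Real.sin y)) (segment ℝ Real.pi x) y :=
    fun y _ => (hasDerivAt_S_s11 P y).hasDerivWithinAt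
  have hmvt := Convex.norm_image_sub_le_of_norm_hasDerivWithin_le hd hbound
    (convex_segment _ _) (left_mem_segment ℝ Real.pi x) (right_mem_segment ℝ Real.pi x)
  rw [Real.norm_eq_abs, Real.norm_eq_abs, hSpi] at hmvt
  calc |S P x - Real.pi| ≤ 4 * P * |x - Real.pi| ^ (2 * P) * |x - Real.pi| := hmvt
    _ = 4 * P * |x - Real.pi| ^ (2 * P + 1) := by rw [mul_assoc, ← pow_succ]
end
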